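/- For positive integers d, n, a with a < (d+3)/2, the number of partitions with perimeter n whose parts are ≡ ±a (mod d+4) is at most the number of partitions with perimeter n whose parts are ≡ ±a (mod d+3). -/

import Mathlib

/-!
The parts `≡ ±a (mod M)` listed increasingly are `a, M - a, M + a, 2M - a, …`. Writing such a part
as `x + a = qM + r` with `r ∈ {0, 2a}`, the map `x ↦ x - q (M - m)` sends it to the part with the
same index in the list for a smaller modulus `m > 2a`; it is strictly increasing and never
increases a part. Applying it to every part of a partition lowers the largest part by some `k`,
and appending `k` parts equal to `a` restores the perimeter. The resulting map between the two
sets of partitions is injective, since the largest part, and hence `k`, can be recovered.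
-/

/-- A partition: a nonempty, nonincreasing list of positive integers. -/
def IsPartition (l : List ℕ) : Prop :=
  l ≠ [] ∧ l.Pairwise (· ≥ ·) ∧ ∀ x ∈ l, 0 < x

/-- Perimeter: (largest part) + (number of parts) - 1. -/
def perimeter (l : List ℕ) : ℕ := l.headI + l.length - 1

/-- d-distinct: consecutive parts differ by at least d. -/
def DDistinct (d : ℕ) (l : List ℕ) : Prop := l.Chain' (fun x y => y + d ≤ x)

lemma List.headI_mem_of_ne_nil {α : Type*} [Inhabited α] {l : List α} (hl : l ≠ []) :
    l.headI ∈ l := by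
  cases l with
  | nil => exact absurd rfl hl
  | cons b t => exact List.mem_cons_self

lemma IsPartition.le_headI {l : List ℕ} (hl : IsPartition l) {x : ℕ} (hx : x ∈ l) :
    x ≤ l.headI := by
  cases l with
  | nil => simp at hx
  | cons b t =>
    rcases List.mem_cons.mp hx with rfl | hx
    · exact le_rfl
    · exact List.rel_of_pairwise_cons hl.2.1 hx

lemma IsPartition.length_le_perimeter {l : List ℕ} (hl : IsPartition l) :
    l.length ≤ perimeter l := by
  have := hl.2.2 _ (List.headI_mem_of_ne_nil hl.1)
  unfold perimeter
  omega

lemma IsPartition.lt_perimeter_add_one {l : List ℕ} (hl : IsPartition l) {x : ℕ} (hx : x ∈ l) :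
    x < perimeter l + 1 := by
  have := hl.le_headI hx
  have := List.length_pos_iff.mpr hl.1
  unfold perimeter
  omega

lemma finite_setOf_isPartition_perimeter_eq (n : ℕ) :
    {l : List ℕ | IsPartition l ∧ perimeter l = n}.Finite := by
  refine ((List.finite_length_le (Fin (n + 1)) n).image (List.map Fin.val)).subset ?_
  rintro l ⟨hl, hn⟩
  have hlen : l.length ≤ n := hn ▸ hl.length_le_perimeter
  lift l to List (Fin (n + 1)) using fun x hx => hn ▸ hl.lt_perimeter_add_one hx
  exact ⟨l, by simpa using hlen, rfl⟩

def mapPad (f : ℕ → ℕ) (c : ℕ) (l : List ℕ) : List ℕ :=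
  l.map f ++ List.replicate (l.headI - f l.headI) c

section mapPad

variable {f : ℕ → ℕ} {c : ℕ} {s : Set ℕ}

lemma headI_mapPad {l : List ℕ} (hl : l ≠ []) : (mapPad f c l).headI = f l.headI := by
  cases l with
  | nil => exact absurd rfl hl
  | cons b t => rfl

lemma perimeter_mapPad {l : List ℕ} (hl : l ≠ []) (hf : f l.headI ≤ l.headI) :
    perimeter (mapPad f c l) = perimeter l := by
  have := List.length_pos_iff.mpr hl
  rw [perimeter, perimeter, headI_mapPad hl]
  simp only [mapPad, List.length_append, List.length_map, List.length_replicate]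
  omega

lemma forall_mem_mapPad {t : Set ℕ} {l : List ℕ} (hls : ∀ x ∈ l, x ∈ s) (hf : Set.MapsTo f s t)
    (hc : c ∈ t) : ∀ y ∈ mapPad f c l, y ∈ t := by
  simp only [mapPad, List.mem_append, List.mem_map, List.mem_replicate]
  rintro _ (⟨x, hx, rfl⟩ | ⟨-, rfl⟩)
  exacts [hf (hls x hx), hc]

lemma isPartition_mapPad {l : List ℕ} (hl : IsPartition l) (hls : ∀ x ∈ l, x ∈ s)
    (hf : MonotoneOn f s) (hc : 0 < c) (hcf : ∀ x ∈ s, c ≤ f x) :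
    IsPartition (mapPad f c l) := by
  refine ⟨by simp [mapPad, hl.1], List.pairwise_append.mpr ⟨?_, ?_, ?_⟩, ?_⟩
  · exact List.pairwise_map.mpr <| hl.2.1.imp_of_mem fun hx hy hxy => hf (hls _ hy) (hls _ hx) hxy
  · exact List.pairwise_replicate.mpr (Or.inr le_rfl)
  · simp only [List.mem_map, List.mem_replicate]
    rintro _ ⟨x, hx, rfl⟩ _ ⟨-, rfl⟩
    exact hcf x (hls x hx)
  · exact forall_mem_mapPad (t := Set.Ioi 0) hls (fun x hx => hc.trans_le (hcf x hx)) hc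

lemma mapPad_injOn (hf : Set.InjOn f s) :
    Set.InjOn (mapPad f c) {l | l ≠ [] ∧ ∀ x ∈ l, x ∈ s} := by
  rintro l₁ ⟨hne₁, hs₁⟩ l₂ ⟨hne₂, hs₂⟩ h
  have hhead : l₁.headI = l₂.headI :=
    hf (hs₁ _ (List.headI_mem_of_ne_nil hne₁)) (hs₂ _ (List.headI_mem_of_ne_nil hne₂)) <| by
      rw [← headI_mapPad (f := f) (c := c) hne₁, ← headI_mapPad (f := f) (c := c) hne₂, h]
  have hmap : l₁.map f = l₂.map f := by
    unfold mapPad at h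
    rw [hhead] at h
    exact List.append_cancel_right h
  have hlen : l₁.length = l₂.length := by simpa using congrArg List.length hmap
  refine List.ext_getElem hlen fun i h₁ h₂ => hf (hs₁ _ (List.getElem_mem h₁))
    (hs₂ _ (List.getElem_mem h₂)) ?_
  simpa [List.getElem?_eq_getElem h₁, List.getElem?_eq_getElem h₂] using congrArg (·[i]?) hmap

theorem card_isPartition_le_of_strictMonoOn {t : Set ℕ} (n : ℕ) (hf : StrictMonoOn f s)
    (hst : Set.MapsTo f s t) (hle : ∀ x ∈ s, f x ≤ x) (hc : 0 < c) (hct : c ∈ t)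
    (hcf : ∀ x ∈ s, c ≤ f x) :
    Nat.card {l : List ℕ // IsPartition l ∧ perimeter l = n ∧ ∀ x ∈ l, x ∈ s} ≤
      Nat.card {l : List ℕ // IsPartition l ∧ perimeter l = n ∧ ∀ x ∈ l, x ∈ t} := by
  have : Finite {l : List ℕ // IsPartition l ∧ perimeter l = n ∧ ∀ x ∈ l, x ∈ t} :=
    ((finite_setOf_isPartition_perimeter_eq n).subset fun _ hl => ⟨hl.1, hl.2.1⟩).to_subtype
  refine Nat.card_le_card_of_injective
    (fun l => ⟨mapPad f c l, isPartition_mapPad l.2.1 l.2.2.2 hf.monotoneOn hc hcf, ?_, ?_⟩) ?_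
  · exact (perimeter_mapPad l.2.1.1 (hle _ (l.2.2.2 _ (List.headI_mem_of_ne_nil l.2.1.1)))).trans
      l.2.2.1
  · exact forall_mem_mapPad l.2.2.2 hst hct
  · rintro ⟨l₁, hl₁⟩ ⟨l₂, hl₂⟩ h
    exact Subtype.ext <|
      mapPad_injOn hf.injOn ⟨hl₁.1.1, hl₁.2.2⟩ ⟨hl₂.1.1, hl₂.2.2⟩ (congrArg Subtype.val h)

end mapPad

lemma mul_add_lt_mul_add_of_mul_add_lt {q q' r r' m M : ℕ} (hr : r < m) (hr' : r' < M)
    (h : q * M + r < q' * M + r') : q * m + r < q' * m + r' := by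
  rcases lt_trichotomy q q' with hq | rfl | hq
  · have := Nat.mul_le_mul_right m hq
    rw [Nat.succ_mul] at this
    omega
  · omega
  · have := Nat.mul_le_mul_right M hq
    rw [Nat.succ_mul] at this
    omega

def residueClassPM (M a : ℕ) : Set ℕ := {x | x % M = a % M ∨ (x + a) % M = 0}

def shrinkPart (M m a x : ℕ) : ℕ := x - (x + a) / M * (M - m)

section shrinkPart

variable {M m a x : ℕ}

lemma mem_residueClassPM_iff (h : 2 * a < M) :
    x ∈ residueClassPM M a ↔ (x + a) % M = 0 ∨ (x + a) % M = 2 * a := by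
  have h2a : (a + a) % M = 2 * a := by rw [← two_mul]; exact Nat.mod_eq_of_lt h
  have : x ≡ a [MOD M] ↔ (x + a) % M = 2 * a := by
    rw [← h2a]
    exact ⟨Nat.ModEq.add_right a, Nat.ModEq.add_right_cancel' a⟩
  exact (or_congr_left this).trans or_comm

variable (hmM : m ≤ M) (ha : 0 < a) (hm : 2 * a < m)
include hmM ha hm

lemma two_mul_le_div_mul_add_mod (hx : x ∈ residueClassPM M a) :
    2 * a ≤ (x + a) / M * m + (x + a) % M := by
  rcases (mem_residueClassPM_iff (by omega)).mp hx with h0 | h2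
  · have hq : 0 < (x + a) / M := Nat.pos_of_ne_zero fun hq => by
      have := Nat.div_add_mod' (x + a) M
      rw [hq, h0] at this
      omega
    have := Nat.le_mul_of_pos_left m hq
    omega
  · omega

lemma shrinkPart_add (hx : x ∈ residueClassPM M a) :
    shrinkPart M m a x + a = (x + a) / M * m + (x + a) % M := by
  have hsplit : (x + a) / M * M = (x + a) / M * m + (x + a) / M * (M - m) := by
    rw [← Nat.mul_add, Nat.add_sub_cancel' hmM]
  have := Nat.div_add_mod' (x + a) M
  have := two_mul_le_div_mul_add_mod hmM ha hm hx
  unfold shrinkPart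
  omega

lemma le_shrinkPart (hx : x ∈ residueClassPM M a) : a ≤ shrinkPart M m a x := by
  have := shrinkPart_add hmM ha hm hx
  have := two_mul_le_div_mul_add_mod hmM ha hm hx
  omega

lemma mapsTo_shrinkPart :
    Set.MapsTo (shrinkPart M m a) (residueClassPM M a) (residueClassPM m a) := by
  intro x hx
  rw [mem_residueClassPM_iff hm, shrinkPart_add hmM ha hm hx, Nat.mul_add_mod_self_right]
  rcases (mem_residueClassPM_iff (by omega)).mp hx with h | h <;> rw [h]
  · exact Or.inl (Nat.zero_mod m)
  · exact Or.inr (Nat.mod_eq_of_lt hm)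

lemma strictMonoOn_shrinkPart : StrictMonoOn (shrinkPart M m a) (residueClassPM M a) := by
  have hr : ∀ z ∈ residueClassPM M a, (z + a) % M < m := fun z hz => by
    rcases (mem_residueClassPM_iff (by omega)).mp hz with h | h <;> omega
  intro x hx y hy hxy
  have hlt : (x + a) / M * M + (x + a) % M < (y + a) / M * M + (y + a) % M := by
    rw [Nat.div_add_mod', Nat.div_add_mod']
    omega
  have := mul_add_lt_mul_add_of_mul_add_lt (hr x hx) (Nat.mod_lt _ (by omega)) hlt
  have := shrinkPart_add hmM ha hm hx
  have := shrinkPart_add hmM ha hm hy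
  omega

end shrinkPart

theorem stmt15_general (d n a : ℕ) (ha : 0 < a) (h : 2 * a < d + 3) :
    Nat.card {l : List ℕ // IsPartition l ∧ perimeter l = n ∧
        ∀ x ∈ l, x % (d + 4) = a % (d + 4) ∨ (x + a) % (d + 4) = 0}
      ≤ Nat.card {l : List ℕ // IsPartition l ∧ perimeter l = n ∧
          ∀ x ∈ l, x % (d + 3) = a % (d + 3) ∨ (x + a) % (d + 3) = 0} :=
  have hmM : d + 3 ≤ d + 4 := by omega
  card_isPartition_le_of_strictMonoOn (s := residueClassPM (d + 4) a)
    (t := residueClassPM (d + 3) a) n (strictMonoOn_shrinkPart hmM ha h)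
    (mapsTo_shrinkPart hmM ha h) (fun _ _ => Nat.sub_le _ _) ha (Or.inl rfl)
    (fun _ => le_shrinkPart hmM ha h)

theorem stmt15 (d n a : ℕ) (hd : 0 < d) (hn : 0 < n) (ha : 0 < a) (h : 2 * a < d + 3) :
    Nat.card {l : List ℕ // IsPartition l ∧ perimeter l = n ∧
        ∀ x ∈ l, x % (d + 4) = a % (d + 4) ∨ (x + a) % (d + 4) = 0}
      ≤ Nat.card {l : List ℕ // IsPartition l ∧ perimeter l = n ∧
          ∀ x ∈ l, x % (d + 3) = a % (d + 3) ∨ (x + a) % (d + 3) = 0} :=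
  stmt15_general d n a ha h
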